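/- Let K_{ij} = K_{ji} > 0 for 0 \leq i \neq j \leq n and let A(u) be defined by A_{ii}(u) = \sum_{1\leq j\neq i\leq n}(K_{ij}-K_{i0})u_j + K_{i0} and A_{ij}(u) = -(K_{ij}-K_{i0})u_i for i \neq j. Then with \beta = \min_{0\leq i\neq j\leq n} K_{ij}, for every u in the open simplex D and every z \in \mathbb{R}^n, z^T H(u) A(u) z \geq \beta \sum_{i=1}^n z_i^2/u_i, where H(u) is the Hessian of the logarithmic entropy density. -/
import Mathlib


open Finset

def openSimplex (n : ℕ) : Set (Fin n → ℝ) :=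
  {u | (∀ i, 0 < u i) ∧ ∑ i, u i < 1}

/-- Hessian of the logarithmic entropy. -/
noncomputable def entropyHess (n : ℕ) (u : Fin n → ℝ) : Matrix (Fin n) (Fin n) ℝ :=
  fun i j => if i = j then 1 / u i + 1 / (1 - ∑ k, u k) else 1 / (1 - ∑ k, u k)

/-- The diffusion matrix `A(u)` associated with the cross-diffusion coefficients `K`
(species `i ∈ {1,…,n}` represented by the index `i.succ` in `Fin (n+1)`):
`A_{ii}(u) = ∑_{j ≠ i} (K_{ij} - K_{i0}) u_j + K_{i0}`,
`A_{ij}(u) = -(K_{ij} - K_{i0}) u_i` for `i ≠ j`. -/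
noncomputable def diffusionMatrix (n : ℕ) (K : Fin (n + 1) → Fin (n + 1) → ℝ)
    (u : Fin n → ℝ) : Matrix (Fin n) (Fin n) ℝ :=
  fun i j =>
    if i = j then
      (∑ k ∈ univ.filter (· ≠ i), (K i.succ k.succ - K i.succ 0) * u k) + K i.succ 0
    else -(K i.succ j.succ - K i.succ 0) * u i

theorem entropyHess_mul_diffusion_lower_bound (n : ℕ) (hn : 1 ≤ n)
    (K : Fin (n + 1) → Fin (n + 1) → ℝ)
    (hsym : ∀ i j, K i j = K j i)
    (hpos : ∀ i j, i ≠ j → 0 < K i j)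
    (β : ℝ) (hβ : IsLeast {x | ∃ i j : Fin (n + 1), i ≠ j ∧ x = K i j} β)
    (u : Fin n → ℝ) (hu : u ∈ openSimplex n) (z : Fin n → ℝ) :
    β * ∑ i, z i ^ 2 / u i ≤
      ∑ i, ∑ j, z i * (entropyHess n u * diffusionMatrix n K u) i j * z j := by
  obtain ⟨hu0, hu1⟩ := hu
  have hρ0 : (0:ℝ) < 1 - ∑ k, u k := by simpa using sub_pos.mpr hu1
  set A := diffusionMatrix n K u with hAdef
  set ρ := ∑ k, u k with hρdef
  set s := ∑ k, z k with hsdef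
  have hune : ∀ i, u i ≠ 0 := fun i => (hu0 i).ne'
  have hρne : (1:ℝ) - ρ ≠ 0 := hρ0.ne'
  -- facts about β
  obtain ⟨⟨i0, j0, hij0, hβeq⟩, hβub⟩ := hβ
  have hβpos : 0 < β := hβeq ▸ hpos i0 j0 hij0
  have hβK : ∀ i j : Fin n, i ≠ j → β ≤ K i.succ j.succ := fun i j h =>
    hβub ⟨i.succ, j.succ, fun he => h (Fin.succ_injective n he), rfl⟩
  have hβK0 : ∀ i : Fin n, β ≤ K i.succ 0 := fun i =>
    hβub ⟨i.succ, 0, Fin.succ_ne_zero i, rfl⟩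
  -- abbreviations
  have F1 : ∀ i j, (entropyHess n u * A) i j = A i j / u i + (∑ k, A k j) / (1 - ρ) := by
    intro i j
    rw [Matrix.mul_apply]
    have hH : ∀ k, entropyHess n u i k = (if i = k then 1 / u i else 0) + 1 / (1 - ρ) := by
      intro k
      by_cases h : i = k <;> simp [entropyHess, h, ← hρdef]
    calc ∑ k, entropyHess n u i k * A k j
        = ∑ k, ((if i = k then 1 / u i else 0) * A k j + 1 / (1 - ρ) * A k j) := by
          refine Finset.sum_congr rfl fun k _ => ?_
          rw [hH k, add_mul]
      _ = (1 / u i) * A i j + (1 / (1 - ρ)) * ∑ k, A k j := by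
          rw [Finset.sum_add_distrib, ← Finset.mul_sum]
          congr 1
          simp
      _ = A i j / u i + (∑ k, A k j) / (1 - ρ) := by ring
  have F2 : ∀ j, ∑ k, A k j = K j.succ 0 * (1 - ρ) + ∑ k, K k.succ 0 * u k := by
    intro j
    have h1 : ∑ k, A k j = A j j + ∑ k ∈ univ.erase j, A k j :=
      (Finset.add_sum_erase univ _ (mem_univ j)).symm
    have h2 : A j j = (∑ k ∈ univ.erase j, (K j.succ k.succ - K j.succ 0) * u k)
        + K j.succ 0 := by
      rw [hAdef]
      simp only [diffusionMatrix, if_true]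
      rw [Finset.filter_ne']
    have h3 : ∀ k ∈ univ.erase j, A k j = -(K j.succ k.succ - K k.succ 0) * u k := by
      intro k hk
      have hkj : k ≠ j := Finset.ne_of_mem_erase hk
      rw [hAdef]
      simp only [diffusionMatrix, if_neg hkj]
      rw [hsym k.succ j.succ]
    have h4 : (∑ k ∈ univ.erase j, (K j.succ k.succ - K j.succ 0) * u k)
        + (∑ k ∈ univ.erase j, -(K j.succ k.succ - K k.succ 0) * u k)
        = ∑ k ∈ univ.erase j, (K k.succ 0 - K j.succ 0) * u k := by
      rw [← Finset.sum_add_distrib]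
      exact Finset.sum_congr rfl fun k _ => by ring
    have h5 : ∑ k ∈ univ.erase j, (K k.succ 0 - K j.succ 0) * u k
        = ∑ k, (K k.succ 0 - K j.succ 0) * u k := by
      rw [Finset.sum_erase_eq_sub (mem_univ j)]
      simp
    have h6 : ∑ k, (K k.succ 0 - K j.succ 0) * u k
        = (∑ k, K k.succ 0 * u k) - K j.succ 0 * ρ := by
      rw [hρdef, Finset.mul_sum, ← Finset.sum_sub_distrib]
      exact Finset.sum_congr rfl fun k _ => by ring
    rw [h1, h2, Finset.sum_congr rfl h3]
    linear_combination h4 + h5 + h6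
  -- Step 1 : split the quadratic form
  have hT : (∑ j, z j * ((K j.succ 0 * (1 - ρ) + ∑ k, K k.succ 0 * u k) / (1 - ρ)))
      = (∑ k, K k.succ 0 * z k) + s * (∑ k, K k.succ 0 * u k) / (1 - ρ) := by
    have e : ∀ j : Fin n, z j * ((K j.succ 0 * (1 - ρ) + ∑ k, K k.succ 0 * u k) / (1 - ρ))
        = K j.succ 0 * z j + (∑ k, K k.succ 0 * u k) / (1 - ρ) * z j := by
      intro j
      field_simp [hune j, hρne]
    rw [Finset.sum_congr rfl fun j _ => e j, Finset.sum_add_distrib, ← Finset.mul_sum,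
      ← hsdef]
    ring
  have hQsplit : (∑ i, ∑ j, z i * (entropyHess n u * A) i j * z j)
      = (∑ i, ∑ j, z i * z j * A i j / u i)
        + s * ((∑ k, K k.succ 0 * z k) + s * (∑ k, K k.succ 0 * u k) / (1 - ρ)) := by
    have e : ∀ i j : Fin n, z i * (entropyHess n u * A) i j * z j
        = z i * z j * A i j / u i
          + z i * (z j * ((K j.succ 0 * (1 - ρ) + ∑ k, K k.succ 0 * u k) / (1 - ρ))) := by
      intro i j
      rw [F1, F2]
      ring
    calc ∑ i, ∑ j, z i * (entropyHess n u * A) i j * z j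
        = ∑ i, ((∑ j, z i * z j * A i j / u i)
            + ∑ j, z i * (z j * ((K j.succ 0 * (1 - ρ) + ∑ k, K k.succ 0 * u k) / (1 - ρ)))) := by
          refine Finset.sum_congr rfl fun i _ => ?_
          rw [← Finset.sum_add_distrib]
          exact Finset.sum_congr rfl fun j _ => e i j
      _ = (∑ i, ∑ j, z i * z j * A i j / u i)
          + ∑ i, z i * ∑ j, (z j * ((K j.succ 0 * (1 - ρ) + ∑ k, K k.succ 0 * u k) / (1 - ρ))) := by
          rw [Finset.sum_add_distrib]
          congr 1
          exact Finset.sum_congr rfl fun i _ => (Finset.mul_sum _ _ _).symm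
      _ = _ := by
          rw [← Finset.sum_mul, ← hsdef, hT]
  -- Step 2 : per-row identity for the A-part
  have F3 : ∀ i, (∑ j, z i * z j * A i j / u i)
      = (∑ j, K i.succ j.succ * (z i * (u j * z i - u i * z j)) / u i)
        - K i.succ 0 * (ρ * (z i ^ 2 / u i) - z i * s) + K i.succ 0 * (z i ^ 2 / u i) := by
    intro i
    have hdiag : A i i = (∑ k ∈ univ.erase i, (K i.succ k.succ - K i.succ 0) * u k)
        + K i.succ 0 := by
      rw [hAdef]
      simp only [diffusionMatrix, if_true]
      rw [Finset.filter_ne']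
    have hdiag2 : z i * z i * A i i / u i
        = (∑ j ∈ univ.erase i, (K i.succ j.succ - K i.succ 0) * u j * (z i * z i / u i))
          + K i.succ 0 * (z i ^ 2 / u i) := by
      rw [hdiag, ← Finset.sum_mul]
      ring
    have hcomb : ∀ j ∈ univ.erase i,
        (K i.succ j.succ - K i.succ 0) * u j * (z i * z i / u i) + z i * z j * A i j / u i
          = (K i.succ j.succ - K i.succ 0) * (z i * (u j * z i - u i * z j)) / u i := by
      intro j hj
      have hji : j ≠ i := Finset.ne_of_mem_erase hj
      have hAij : A i j = -(K i.succ j.succ - K i.succ 0) * u i := by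
        rw [hAdef]
        simp only [diffusionMatrix, if_neg (Ne.symm hji)]
      rw [hAij]
      field_simp [hune i]
      ring
    have hzero : (K i.succ i.succ - K i.succ 0) * (z i * (u i * z i - u i * z i)) / u i = 0 := by
      simp
    have hC1 : (∑ j, (K i.succ j.succ - K i.succ 0) * (z i * (u j * z i - u i * z j)) / u i)
        = (∑ j, K i.succ j.succ * (z i * (u j * z i - u i * z j)) / u i)
          - K i.succ 0 * (ρ * (z i ^ 2 / u i) - z i * s) := by
      have e1 : ∀ j : Fin n,
          (K i.succ j.succ - K i.succ 0) * (z i * (u j * z i - u i * z j)) / u i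
          = K i.succ j.succ * (z i * (u j * z i - u i * z j)) / u i
            - (K i.succ 0 * (z i ^ 2 / u i) * u j - (K i.succ 0 * z i) * z j) := by
        intro j
        field_simp [hune i]
      rw [Finset.sum_congr rfl fun j _ => e1 j, Finset.sum_sub_distrib,
        Finset.sum_sub_distrib, ← Finset.mul_sum, ← Finset.mul_sum, ← hρdef, ← hsdef]
      ring
    calc ∑ j, z i * z j * A i j / u i
        = z i * z i * A i i / u i + ∑ j ∈ univ.erase i, z i * z j * A i j / u i :=
          (Finset.add_sum_erase univ _ (mem_univ i)).symm
      _ = (∑ j ∈ univ.erase i,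
            ((K i.succ j.succ - K i.succ 0) * u j * (z i * z i / u i)
              + z i * z j * A i j / u i)) + K i.succ 0 * (z i ^ 2 / u i) := by
          rw [hdiag2, Finset.sum_add_distrib]
          ring
      _ = (∑ j ∈ univ.erase i,
            (K i.succ j.succ - K i.succ 0) * (z i * (u j * z i - u i * z j)) / u i)
          + K i.succ 0 * (z i ^ 2 / u i) := by
          rw [Finset.sum_congr rfl hcomb]
      _ = (∑ j, (K i.succ j.succ - K i.succ 0) * (z i * (u j * z i - u i * z j)) / u i)
          + K i.succ 0 * (z i ^ 2 / u i) := by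
          rw [Finset.sum_erase_eq_sub (mem_univ i), hzero, sub_zero]
      _ = _ := by rw [hC1]
  -- sum up F3
  have hS1 : (∑ i, ∑ j, z i * z j * A i j / u i)
      = (∑ i, ∑ j, K i.succ j.succ * (z i * (u j * z i - u i * z j)) / u i)
        - (ρ * (∑ k, K k.succ 0 * (z k ^ 2 / u k)) - s * (∑ k, K k.succ 0 * z k))
        + (∑ k, K k.succ 0 * (z k ^ 2 / u k)) := by
    rw [Finset.sum_congr rfl fun i _ => F3 i]
    have e : ∀ i : Fin n,
        (∑ j, K i.succ j.succ * (z i * (u j * z i - u i * z j)) / u i)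
          - K i.succ 0 * (ρ * (z i ^ 2 / u i) - z i * s) + K i.succ 0 * (z i ^ 2 / u i)
        = (∑ j, K i.succ j.succ * (z i * (u j * z i - u i * z j)) / u i)
          - (ρ * (K i.succ 0 * (z i ^ 2 / u i)) - s * (K i.succ 0 * z i))
          + K i.succ 0 * (z i ^ 2 / u i) := by
      intro i; ring
    rw [Finset.sum_congr rfl fun i _ => e i]
    simp only [Finset.sum_add_distrib, Finset.sum_sub_distrib, ← Finset.mul_sum]
  -- the K_{i0} part
  have hQC : (∑ i, K i.succ 0 * ((1 - ρ) * z i + u i * s) ^ 2 / (u i * (1 - ρ)))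
      = (1 - ρ) * (∑ k, K k.succ 0 * (z k ^ 2 / u k)) + 2 * (s * (∑ k, K k.succ 0 * z k))
        + s ^ 2 * (∑ k, K k.succ 0 * u k) / (1 - ρ) := by
    have e : ∀ i : Fin n, K i.succ 0 * ((1 - ρ) * z i + u i * s) ^ 2 / (u i * (1 - ρ))
        = (1 - ρ) * (K i.succ 0 * (z i ^ 2 / u i)) + 2 * s * (K i.succ 0 * z i)
          + s ^ 2 / (1 - ρ) * (K i.succ 0 * u i) := by
      intro i
      field_simp [hune i, hρne]
      ring
    rw [Finset.sum_congr rfl fun i _ => e i]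
    simp only [Finset.sum_add_distrib, ← Finset.mul_sum]
    ring
  -- main identity
  have hQ : (∑ i, ∑ j, z i * (entropyHess n u * A) i j * z j)
      = (∑ i, ∑ j, K i.succ j.succ * (z i * (u j * z i - u i * z j)) / u i)
        + (∑ i, K i.succ 0 * ((1 - ρ) * z i + u i * s) ^ 2 / (u i * (1 - ρ))) := by
    rw [hQsplit, hS1, hQC]
    ring
  -- symmetrization of the K_{ij} part
  have hswap : (∑ i, ∑ j, K i.succ j.succ * (z i * (u j * z i - u i * z j)) / u i)
      = ∑ i, ∑ j, K j.succ i.succ * (z j * (u i * z j - u j * z i)) / u j := by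
    rw [Finset.sum_comm]
  have h2QB : (∑ i, ∑ j, K i.succ j.succ * (z i * (u j * z i - u i * z j)) / u i)
        + (∑ i, ∑ j, K i.succ j.succ * (z i * (u j * z i - u i * z j)) / u i)
      = ∑ i, ∑ j, K i.succ j.succ * ((u j * z i - u i * z j) ^ 2 / (u i * u j)) := by
    nth_rewrite 2 [hswap]
    rw [← Finset.sum_add_distrib]
    refine Finset.sum_congr rfl fun i _ => ?_
    rw [← Finset.sum_add_distrib]
    refine Finset.sum_congr rfl fun j _ => ?_
    rw [hsym j.succ i.succ]
    field_simp [hune i, hune j]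
    ring
  -- termwise lower bounds
  have key1 : β * (∑ i, ∑ j, (u j * z i - u i * z j) ^ 2 / (u i * u j))
      ≤ ∑ i, ∑ j, K i.succ j.succ * ((u j * z i - u i * z j) ^ 2 / (u i * u j)) := by
    rw [Finset.mul_sum]
    refine Finset.sum_le_sum fun i _ => ?_
    rw [Finset.mul_sum]
    refine Finset.sum_le_sum fun j _ => ?_
    by_cases hij : i = j
    · subst hij
      simp
    · have hnn : 0 ≤ (u j * z i - u i * z j) ^ 2 / (u i * u j) :=
        div_nonneg (sq_nonneg _) (mul_nonneg (hu0 i).le (hu0 j).le)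
      exact mul_le_mul_of_nonneg_right (hβK i j hij) hnn
  have key2 : β * (∑ i, ((1 - ρ) * z i + u i * s) ^ 2 / (u i * (1 - ρ)))
      ≤ ∑ i, K i.succ 0 * ((1 - ρ) * z i + u i * s) ^ 2 / (u i * (1 - ρ)) := by
    rw [Finset.mul_sum]
    refine Finset.sum_le_sum fun i _ => ?_
    have hnn : 0 ≤ ((1 - ρ) * z i + u i * s) ^ 2 / (u i * (1 - ρ)) :=
      div_nonneg (sq_nonneg _) (mul_nonneg (hu0 i).le hρ0.le)
    calc β * (((1 - ρ) * z i + u i * s) ^ 2 / (u i * (1 - ρ)))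
        ≤ K i.succ 0 * (((1 - ρ) * z i + u i * s) ^ 2 / (u i * (1 - ρ))) :=
          mul_le_mul_of_nonneg_right (hβK0 i) hnn
      _ = K i.succ 0 * ((1 - ρ) * z i + u i * s) ^ 2 / (u i * (1 - ρ)) := by ring
  -- the final sum identity
  have hDB : (∑ i, ∑ j, (u j * z i - u i * z j) ^ 2 / (u i * u j))
      = 2 * (ρ * ∑ i, z i ^ 2 / u i) - 2 * s ^ 2 := by
    have e : ∀ i j : Fin n, (u j * z i - u i * z j) ^ 2 / (u i * u j)
        = (z i ^ 2 / u i) * u j - 2 * (z i * z j) + (z j ^ 2 / u j) * u i := by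
      intro i j
      field_simp [hune i, hune j]
      ring
    calc ∑ i, ∑ j, (u j * z i - u i * z j) ^ 2 / (u i * u j)
        = ∑ i, ((z i ^ 2 / u i) * ρ - 2 * (z i * s) + (∑ j, z j ^ 2 / u j) * u i) := by
          refine Finset.sum_congr rfl fun i _ => ?_
          rw [Finset.sum_congr rfl fun j _ => e i j]
          simp only [Finset.sum_add_distrib, Finset.sum_sub_distrib, ← Finset.mul_sum,
            ← Finset.sum_mul, ← hρdef, ← hsdef]
      _ = (∑ i, z i ^ 2 / u i) * ρ - 2 * (s * s) + (∑ j, z j ^ 2 / u j) * ρ := by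
          simp only [Finset.sum_add_distrib, Finset.sum_sub_distrib, ← Finset.mul_sum,
            ← Finset.sum_mul, ← hρdef, ← hsdef]
      _ = _ := by ring
  have hSC : (∑ i, ((1 - ρ) * z i + u i * s) ^ 2 / (u i * (1 - ρ)))
      = (1 - ρ) * (∑ i, z i ^ 2 / u i) + 2 * s ^ 2 + s ^ 2 / (1 - ρ) * ρ := by
    have e : ∀ i : Fin n, ((1 - ρ) * z i + u i * s) ^ 2 / (u i * (1 - ρ))
        = (1 - ρ) * (z i ^ 2 / u i) + 2 * (s * z i) + s ^ 2 / (1 - ρ) * u i := by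
      intro i
      field_simp [hune i, hρne]
      ring
    rw [Finset.sum_congr rfl fun i _ => e i]
    simp only [Finset.sum_add_distrib, ← Finset.mul_sum, ← hρdef, ← hsdef]
    ring
  have hfinal : (1 / 2) * (∑ i, ∑ j, (u j * z i - u i * z j) ^ 2 / (u i * u j))
      + (∑ i, ((1 - ρ) * z i + u i * s) ^ 2 / (u i * (1 - ρ)))
      = (∑ i, z i ^ 2 / u i) + s ^ 2 / (1 - ρ) := by
    rw [hDB, hSC]
    field_simp
    ring
  -- put everything together
  have hs2 : 0 ≤ s ^ 2 / (1 - ρ) := div_nonneg (sq_nonneg s) hρ0.le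
  have hstep1 : β * (∑ i, z i ^ 2 / u i)
      ≤ β * ((1 / 2) * (∑ i, ∑ j, (u j * z i - u i * z j) ^ 2 / (u i * u j))
          + (∑ i, ((1 - ρ) * z i + u i * s) ^ 2 / (u i * (1 - ρ)))) := by
    rw [hfinal]
    have := mul_le_mul_of_nonneg_left (le_add_of_nonneg_right hs2 :
      (∑ i, z i ^ 2 / u i) ≤ (∑ i, z i ^ 2 / u i) + s ^ 2 / (1 - ρ)) hβpos.le
    exact this
  have hstep2 : β * ((1 / 2) * (∑ i, ∑ j, (u j * z i - u i * z j) ^ 2 / (u i * u j))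
          + (∑ i, ((1 - ρ) * z i + u i * s) ^ 2 / (u i * (1 - ρ))))
      = (1 / 2) * (β * ∑ i, ∑ j, (u j * z i - u i * z j) ^ 2 / (u i * u j))
        + β * (∑ i, ((1 - ρ) * z i + u i * s) ^ 2 / (u i * (1 - ρ))) := by
    ring
  linarith [hstep1, hstep2, key1, key2, hQ, h2QB]
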